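/- The improper integral ∫_{0}^{∞} (1 − λ·arctan(1/λ))² dλ converges and equals (π/3)(1 − log 2). -/

import Mathlib

/-!
Put `u x = 1 - x * arccot x`, which is `1 - x * arctan (1 / x)` for `x > 0` but smooth on `ℝ`.
It satisfies `x * u' = u - 1 / (1 + x ^ 2)`, so integrating `x * (u ^ 2)'` by parts gives
`3 ∫ u ^ 2 = [x * u ^ 2] + 2 ∫ u / (1 + x ^ 2)`, and the substitution `x = tan t` turns
`∫ x * arccot x / (1 + x ^ 2)` into an integral of `log ∘ cos`. The result is the explicit primitive
`(x * u ^ 2 + 2 * arctan x - arccot x * log (1 + x ^ 2) + 2 ∫₀^{arctan x} log ∘ cos) / 3` of `u ^ 2`.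
It vanishes at `0`, and at `∞` it tends to `(π / 3) (1 - log 2)`: `x * u ^ 2 = O(x⁻³)` because
`x - x ^ 3 / 3 ≤ arctan x ≤ x`, and `∫₀^{π/2} log ∘ cos = -(π / 2) log 2`.
-/

open Real MeasureTheory Set Filter Topology

namespace Real

theorem arctan_le_self {x : ℝ} (hx : 0 ≤ x) : arctan x ≤ x := by
  simpa only [tan_arctan] using le_tan (arctan_nonneg.2 hx) (arctan_lt_pi_div_two x)

theorem sub_pow_three_div_three_le_arctan {x : ℝ} (hx : 0 ≤ x) : x - x ^ 3 / 3 ≤ arctan x := by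
  have hderiv (y : ℝ) : HasDerivAt (fun y => arctan y - (y - y ^ 3 / 3))
      (y ^ 4 / (1 + y ^ 2)) y := by
    refine ((hasDerivAt_arctan y).sub ((hasDerivAt_id' y).sub
      ((hasDerivAt_pow 3 y).div_const 3))).congr_deriv ?_
    have : 1 + y ^ 2 ≠ 0 := by positivity
    field_simp
    ring
  simpa using monotone_of_hasDerivAt_nonneg hderiv (fun y => by positivity) hx

theorem integral_log_cos_zero_pi_div_two : ∫ x in 0..(π / 2), log (cos x) = -log 2 * π / 2 := by
  rw [← integral_log_sin_zero_pi_div_two]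
  simpa [← sin_pi_div_two_sub] using
    (intervalIntegral.integral_comp_sub_left (fun x ↦ log (sin x)) (π / 2) (a := 0) (b := π / 2))

theorem hasDerivAt_integral_log_cos {a : ℝ} (ha : a ∈ Ioo (-(π / 2)) (π / 2)) :
    HasDerivAt (fun y => ∫ t in (0 : ℝ)..y, log (cos t)) (log (cos a)) a :=
  intervalIntegral.integral_hasDerivAt_right intervalIntegrable_log_cos
    (measurable_log.comp continuous_cos.measurable).stronglyMeasurable.stronglyMeasurableAtFilter
    ((continuousAt_log (cos_pos_of_mem_Ioo ha).ne').comp continuous_cos.continuousAt)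

theorem tendsto_integral_log_cos_arctan_atTop :
    Tendsto (fun x => ∫ t in (0 : ℝ)..arctan x, log (cos t)) atTop (𝓝 (-log 2 * π / 2)) := by
  rw [← integral_log_cos_zero_pi_div_two]
  exact ((intervalIntegral.continuous_primitive (fun _ _ => intervalIntegrable_log_cos) 0).tendsto
    _).comp (tendsto_nhds_of_tendsto_nhdsWithin tendsto_arctan_atTop)

theorem log_cos_arctan (x : ℝ) : log (cos (arctan x)) = -log (1 + x ^ 2) / 2 := by
  rw [cos_arctan, one_div, log_inv, log_sqrt (by positivity)]
  ring

noncomputable def arccot (x : ℝ) : ℝ := π / 2 - arctan x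

theorem arccot_eq_arctan_inv {x : ℝ} (hx : 0 < x) : arccot x = arctan x⁻¹ := by
  rw [arccot, arctan_inv_of_pos hx]

theorem hasDerivAt_arccot (x : ℝ) : HasDerivAt arccot (-(1 / (1 + x ^ 2))) x :=
  (hasDerivAt_arctan x).const_sub (π / 2)

theorem arccot_pos (x : ℝ) : 0 < arccot x := sub_pos.2 (arctan_lt_pi_div_two x)

theorem arccot_le_inv {x : ℝ} (hx : 0 < x) : arccot x ≤ x⁻¹ := by
  rw [arccot_eq_arctan_inv hx]
  exact arctan_le_self (inv_nonneg.2 hx.le)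

end Real

theorem one_sub_mul_arccot_nonneg {x : ℝ} (hx : 0 < x) : 0 ≤ 1 - x * arccot x := by
  have := mul_le_mul_of_nonneg_left (arccot_le_inv hx) hx.le
  rw [mul_inv_cancel₀ hx.ne'] at this
  linarith

theorem one_sub_mul_arccot_le {x : ℝ} (hx : 0 < x) : 1 - x * arccot x ≤ 1 / (3 * x ^ 2) := by
  have := mul_le_mul_of_nonneg_left (sub_pow_three_div_three_le_arctan (inv_nonneg.2 hx.le)) hx.le
  rw [← arccot_eq_arctan_inv hx] at this
  have e : x * (x⁻¹ - x⁻¹ ^ 3 / 3) = 1 - 1 / (3 * x ^ 2) := by field_simp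
  linarith

theorem tendsto_mul_one_sub_mul_arccot_sq_atTop :
    Tendsto (fun x => x * (1 - x * arccot x) ^ 2) atTop (𝓝 0) := by
  have hbound : Tendsto (fun x : ℝ => x⁻¹ ^ 3 / 9) atTop (𝓝 0) := by
    simpa using (tendsto_inv_atTop_zero.pow 3).div_const (9 : ℝ)
  refine tendsto_of_tendsto_of_tendsto_of_le_of_le' tendsto_const_nhds hbound ?_ ?_
  all_goals filter_upwards [eventually_gt_atTop 0] with x hx
  · positivity
  · calc x * (1 - x * arccot x) ^ 2 ≤ x * (1 / (3 * x ^ 2)) ^ 2 := by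
          gcongr
          exacts [one_sub_mul_arccot_nonneg hx, one_sub_mul_arccot_le hx]
      _ = x⁻¹ ^ 3 / 9 := by field_simp; ring

theorem log_one_add_sq_le {x : ℝ} (hx : 1 ≤ x) : log (1 + x ^ 2) ≤ log 2 + 2 * log x := by
  calc log (1 + x ^ 2) ≤ log (2 * x ^ 2) := log_le_log (by positivity) (by nlinarith)
    _ = log 2 + 2 * log x := by rw [log_mul two_ne_zero (by positivity), log_pow]; norm_num

theorem tendsto_arccot_mul_log_one_add_sq_atTop :
    Tendsto (fun x => arccot x * log (1 + x ^ 2)) atTop (𝓝 0) := by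
  have hbound : Tendsto (fun x : ℝ => log 2 * x⁻¹ + 2 * (log x / x)) atTop (𝓝 0) := by
    simpa using (tendsto_inv_atTop_zero.const_mul (log 2)).add
      (isLittleO_log_id_atTop.tendsto_div_nhds_zero.const_mul 2)
  refine tendsto_of_tendsto_of_tendsto_of_le_of_le' tendsto_const_nhds hbound ?_ ?_
  all_goals filter_upwards [eventually_ge_atTop 1] with x hx
  · exact mul_nonneg (arccot_pos x).le (log_nonneg (by nlinarith))
  · calc arccot x * log (1 + x ^ 2) ≤ x⁻¹ * (log 2 + 2 * log x) := by
          gcongr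
          exacts [log_nonneg (by nlinarith), arccot_le_inv (by linarith), log_one_add_sq_le hx]
      _ = log 2 * x⁻¹ + 2 * (log x / x) := by ring

noncomputable def oneSubMulArccotSqPrimitive (x : ℝ) : ℝ :=
  (x * (1 - x * arccot x) ^ 2 + 2 * arctan x - arccot x * log (1 + x ^ 2)
    + 2 * ∫ t in (0 : ℝ)..arctan x, log (cos t)) / 3

theorem hasDerivAt_oneSubMulArccotSqPrimitive (x : ℝ) :
    HasDerivAt oneSubMulArccotSqPrimitive ((1 - x * arccot x) ^ 2) x := by
  have hpos : 0 < 1 + x ^ 2 := by positivity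
  have hu := ((hasDerivAt_id' x).mul (hasDerivAt_arccot x)).const_sub 1
  have hlog : HasDerivAt (fun x => log (1 + x ^ 2)) (2 * x / (1 + x ^ 2)) x := by
    simpa using (((hasDerivAt_pow 2 x).const_add 1).log hpos.ne')
  have hint := (hasDerivAt_integral_log_cos
    ⟨neg_pi_div_two_lt_arctan x, arctan_lt_pi_div_two x⟩).comp x (hasDerivAt_arctan x)
  rw [log_cos_arctan] at hint
  refine (((((hasDerivAt_id' x).mul (hu.pow 2)).add ((hasDerivAt_arctan x).const_mul 2)).sub
    ((hasDerivAt_arccot x).mul hlog)).add (hint.const_mul 2)).div_const 3 |>.congr_deriv ?_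
  simp only [Pi.pow_apply, Pi.mul_apply]
  field_simp
  ring

theorem tendsto_oneSubMulArccotSqPrimitive_atTop :
    Tendsto oneSubMulArccotSqPrimitive atTop (𝓝 (π / 3 * (1 - log 2))) := by
  have := ((((tendsto_mul_one_sub_mul_arccot_sq_atTop.add
    ((tendsto_nhds_of_tendsto_nhdsWithin tendsto_arctan_atTop).const_mul 2)).sub
    tendsto_arccot_mul_log_one_add_sq_atTop).add
    (tendsto_integral_log_cos_arctan_atTop.const_mul 2)).div_const 3)
  rwa [show (0 + 2 * (π / 2) - 0 + 2 * (-log 2 * π / 2)) / 3 = π / 3 * (1 - log 2) by ring]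
    at this

theorem oneSubMulArccotSqPrimitive_zero : oneSubMulArccotSqPrimitive 0 = 0 := by
  simp [oneSubMulArccotSqPrimitive]

/-- The improper integral `∫₀^∞ (1 − λ·arctan(1/λ))² dλ` converges and equals
`(π/3)(1 − log 2)`. -/
theorem integral_one_sub_arctan_sq :
    IntegrableOn (fun lam : ℝ => (1 - lam * Real.arctan (1 / lam)) ^ 2) (Set.Ioi 0) volume ∧
    ∫ lam in Set.Ioi (0:ℝ), (1 - lam * Real.arctan (1 / lam)) ^ 2
      = (π / 3) * (1 - Real.log 2) := by
  have hderiv (x : ℝ) (_ : x ∈ Ici 0) := hasDerivAt_oneSubMulArccotSqPrimitive x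
  have hnonneg (x : ℝ) (_ : x ∈ Ioi 0) : 0 ≤ (1 - x * arccot x) ^ 2 := sq_nonneg _
  have heq : EqOn (fun x => (1 - x * arccot x) ^ 2)
      (fun lam => (1 - lam * arctan (1 / lam)) ^ 2) (Ioi 0) := fun x hx => by
    simp only [one_div, arccot_eq_arctan_inv (mem_Ioi.1 hx)]
  refine ⟨(integrableOn_Ioi_deriv_of_nonneg' hderiv hnonneg
    tendsto_oneSubMulArccotSqPrimitive_atTop).congr_fun heq measurableSet_Ioi, ?_⟩
  rw [← setIntegral_congr_fun measurableSet_Ioi heq, integral_Ioi_of_hasDerivAt_of_nonneg' hderiv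
    hnonneg tendsto_oneSubMulArccotSqPrimitive_atTop, oneSubMulArccotSqPrimitive_zero, sub_zero]
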